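/- If G is a graph of order n with minimum degree δ ≥ 1, minimum hop degree δ_h ≥ 1, and n < δ·δ_h/(ln δ_h + 1), then γ_{trh}(G) ≤ ((ln δ_h + 1)/δ_h) · n. -/

import Mathlib

open Finset

noncomputable section
open scoped Classical

variable {n : ℕ}

/-- The set of vertices at distance exactly 2 from `i`. -/
def N2 (G : SimpleGraph (Fin n)) (i : Fin n) : Finset (Fin n) :=
  Finset.univ.filter (fun j => G.dist i j = 2)

/-- The neighborhood of `i`. -/
def Nbr (G : SimpleGraph (Fin n)) (i : Fin n) : Finset (Fin n) :=
  Finset.univ.filter (fun j => G.Adj i j)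

/-- Hop degree of a vertex. -/
def hopDeg (G : SimpleGraph (Fin n)) (i : Fin n) : ℕ := (N2 G i).card

/-- Minimum hop degree. -/
def minHopDeg (G : SimpleGraph (Fin n)) : ℕ := ⨅ i, hopDeg G i

/-- Minimum degree. -/
def minDeg (G : SimpleGraph (Fin n)) : ℕ := ⨅ i, (Nbr G i).card

def IsHopDomSet (G : SimpleGraph (Fin n)) (S : Finset (Fin n)) : Prop :=
  ∀ u, u ∉ S → ∃ v ∈ S, G.dist u v = 2

def IsTwoStepDomSet (G : SimpleGraph (Fin n)) (S : Finset (Fin n)) : Prop :=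
  ∀ u : Fin n, ∃ v ∈ S, G.dist u v = 2

def IsRestrainedHopDomSet (G : SimpleGraph (Fin n)) (S : Finset (Fin n)) : Prop :=
  IsHopDomSet G S ∧ ∀ u, u ∉ S → ∃ v, v ∉ S ∧ G.Adj u v

def IsTotalRestrainedHopDomSet (G : SimpleGraph (Fin n)) (S : Finset (Fin n)) : Prop :=
  IsTwoStepDomSet G S ∧ ∀ u, u ∉ S → ∃ v, v ∉ S ∧ G.Adj u v

def IsTwoStepRestrainedDomSet (G : SimpleGraph (Fin n)) (S : Finset (Fin n)) : Prop :=
  IsHopDomSet G S ∧ ∀ u, u ∉ S → ∃ v, v ∉ S ∧ G.dist u v = 2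

def IsTotalTwoStepRestrainedDomSet (G : SimpleGraph (Fin n)) (S : Finset (Fin n)) : Prop :=
  IsTwoStepDomSet G S ∧ ∀ u, u ∉ S → ∃ v, v ∉ S ∧ G.dist u v = 2

def hopDomNum (G : SimpleGraph (Fin n)) : ℕ :=
  sInf {k | ∃ S : Finset (Fin n), IsHopDomSet G S ∧ S.card = k}

def twoStepDomNum (G : SimpleGraph (Fin n)) : ℕ :=
  sInf {k | ∃ S : Finset (Fin n), IsTwoStepDomSet G S ∧ S.card = k}

def rhDomNum (G : SimpleGraph (Fin n)) : ℕ :=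
  sInf {k | ∃ S : Finset (Fin n), IsRestrainedHopDomSet G S ∧ S.card = k}

def trhDomNum (G : SimpleGraph (Fin n)) : ℕ :=
  sInf {k | ∃ S : Finset (Fin n), IsTotalRestrainedHopDomSet G S ∧ S.card = k}

def tsrDomNum (G : SimpleGraph (Fin n)) : ℕ :=
  sInf {k | ∃ S : Finset (Fin n), IsTwoStepRestrainedDomSet G S ∧ S.card = k}

def ttsrDomNum (G : SimpleGraph (Fin n)) : ℕ :=
  sInf {k | ∃ S : Finset (Fin n), IsTotalTwoStepRestrainedDomSet G S ∧ S.card = k}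

/-- The graph `Dist(G;2)` joining vertices at distance exactly 2 in `G`. -/
def dist2Graph (G : SimpleGraph (Fin n)) : SimpleGraph (Fin n) where
  Adj u v := u ≠ v ∧ G.dist u v = 2
  symm := ⟨by
    intro u v h
    exact ⟨h.1.symm, by rw [SimpleGraph.dist_comm]; exact h.2⟩⟩
  loopless := ⟨fun v h => h.1 rfl⟩

def domNum (H : SimpleGraph (Fin n)) : ℕ :=
  sInf {k | ∃ S : Finset (Fin n), (∀ u, u ∉ S → ∃ v ∈ S, H.Adj u v) ∧ S.card = k}

def totalDomNum (H : SimpleGraph (Fin n)) : ℕ :=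
  sInf {k | ∃ S : Finset (Fin n), (∀ u : Fin n, ∃ v ∈ S, H.Adj u v) ∧ S.card = k}

/-- Matching number: maximum number of edges in a matching. -/
def matchingNum (G : SimpleGraph (Fin n)) : ℕ :=
  sSup {k | ∃ M : SimpleGraph.Subgraph G, M.IsMatching ∧ M.edgeSet.ncard = k}

/-- A hop matching: a set of paths of length two, no two of which share an end vertex. -/
def IsHopMatching (G : SimpleGraph (Fin n)) (H : Finset (Fin n × Fin n × Fin n)) : Prop :=
  (∀ t ∈ H, G.Adj t.1 t.2.1 ∧ G.Adj t.2.1 t.2.2 ∧ t.1 ≠ t.2.2) ∧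
  ∀ t ∈ H, ∀ t' ∈ H, t ≠ t' →
    t.1 ≠ t'.1 ∧ t.1 ≠ t'.2.2 ∧ t.2.2 ≠ t'.1 ∧ t.2.2 ≠ t'.2.2

/-- Hop matching number. -/
def hopMatchingNum (G : SimpleGraph (Fin n)) : ℕ :=
  sSup {k | ∃ H : Finset (Fin n × Fin n × Fin n), IsHopMatching G H ∧ H.card = k}

def frh (G : SimpleGraph (Fin n)) (p : Fin n → ℝ) : ℝ :=
  (∑ i, p i) + (∑ i, (1 - p i) * ∏ j ∈ N2 G i, (1 - p j)) +
  ∑ i, (1 - p i) * (1 - (1 - p i) * ∏ j ∈ N2 G i, (1 - p j)) *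
    ∏ j ∈ Nbr G i, (p j + (1 - p j) * ∏ k ∈ N2 G j, (1 - p k))

def f2sr (G : SimpleGraph (Fin n)) (p : Fin n → ℝ) : ℝ :=
  (∑ i, p i) + (∑ i, (1 - p i) * ∏ j ∈ N2 G i, (1 - p j)) +
  ∑ i, (1 - p i) * (1 - (1 - p i) * ∏ j ∈ N2 G i, (1 - p j)) *
    ∏ j ∈ N2 G i, (p j + (1 - p j) * ∏ k ∈ N2 G j, (1 - p k))

def ZSet (G : SimpleGraph (Fin n)) (X : Finset (Fin n)) : Finset (Fin n) :=
  Finset.univ.filter (fun i => i ∉ X ∧ N2 G i ∩ X = ∅)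

def YSet (G : SimpleGraph (Fin n)) (X : Finset (Fin n)) : Finset (Fin n) :=
  Finset.univ.filter (fun i => i ∉ X ∪ ZSet G X ∧ Nbr G i ⊆ X ∪ ZSet G X)

def DSet (G : SimpleGraph (Fin n)) (X : Finset (Fin n)) : Finset (Fin n) :=
  X ∪ ZSet G X ∪ YSet G X

/-!
Put each vertex into a random set `X` independently with probability `p = ln δ_h / δ_h`, and add
one vertex at distance two from each vertex having no such vertex in `X`. The result is a 2-step
dominating set of expected size at most `n p + n (1 - p) ^ δ_h ≤ n (ln δ_h + 1) / δ_h`, so some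
2-step dominating set `D` is that small. The hypothesis on `n` makes `|D| < δ`, so no neighbourhood
fits inside `D`: every vertex outside `D` keeps a neighbour outside `D`.
-/

open Real

section BernoulliWeight

variable {α : Type*} [Fintype α] [DecidableEq α]

def bernoulliWeight (p : ℝ) (X : Finset α) : ℝ :=
  p ^ #X * (1 - p) ^ #Xᶜ

lemma bernoulliWeight_nonneg {p : ℝ} (hp0 : 0 ≤ p) (hp1 : p ≤ 1) (X : Finset α) :
    0 ≤ bernoulliWeight p X :=
  mul_nonneg (pow_nonneg hp0 _) (pow_nonneg (sub_nonneg.2 hp1) _)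

lemma sum_bernoulliWeight_disjoint (p : ℝ) (A : Finset α) :
    ∑ X with Disjoint A X, bernoulliWeight p X = (1 - p) ^ #A := by
  have hfilter : ({X | Disjoint A X} : Finset (Finset α)) = Aᶜ.powerset := by
    ext X
    simp [subset_compl_iff_disjoint_left]
  have hweight : ∀ X ∈ Aᶜ.powerset,
      bernoulliWeight p X = (1 - p) ^ #A * (p ^ #X * (1 - p) ^ (#Aᶜ - #X)) := by
    intro X hX
    have hX_le := card_le_card (mem_powerset.1 hX)
    have hXc := card_compl X
    have hAc := card_compl A
    have hA := card_le_univ A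
    rw [bernoulliWeight, mul_left_comm, ← pow_add]
    congr 3
    omega
  rw [hfilter, sum_congr rfl hweight, ← mul_sum, sum_pow_mul_eq_add_pow]
  simp

lemma sum_bernoulliWeight (p : ℝ) : ∑ X : Finset α, bernoulliWeight p X = 1 := by
  simpa using sum_bernoulliWeight_disjoint p (∅ : Finset α)

lemma sum_bernoulliWeight_mem (p : ℝ) (i : α) : ∑ X with i ∈ X, bernoulliWeight p X = p := by
  have hsplit := sum_filter_add_sum_filter_not univ (i ∈ ·) (bernoulliWeight (α := α) p)
  have hnot := sum_bernoulliWeight_disjoint p {i}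
  simp only [disjoint_singleton_left, card_singleton, pow_one] at hnot
  rw [hnot, sum_bernoulliWeight] at hsplit
  linarith

lemma sum_bernoulliWeight_mul_card_filter (p : ℝ) (P : α → Finset α → Prop)
    [∀ i X, Decidable (P i X)] :
    ∑ X, bernoulliWeight p X * #{i | P i X} = ∑ i, ∑ X with P i X, bernoulliWeight p X := by
  simp only [card_filter, Nat.cast_sum, Nat.cast_ite, Nat.cast_one, Nat.cast_zero, mul_sum,
    mul_ite, mul_one, mul_zero, sum_filter]
  exact sum_comm

lemma exists_le_sum_bernoulliWeight_mul {p : ℝ} (hp0 : 0 ≤ p) (hp1 : p ≤ 1)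
    (f : Finset α → ℝ) : ∃ X, f X ≤ ∑ Y, bernoulliWeight p Y * f Y := by
  obtain ⟨X, -, hmin⟩ := exists_min_image (univ : Finset (Finset α)) f univ_nonempty
  refine ⟨X, ?_⟩
  calc f X = (∑ Y, bernoulliWeight p Y) * f X := by rw [sum_bernoulliWeight (α := α), one_mul]
    _ = ∑ Y, bernoulliWeight p Y * f X := by rw [sum_mul]
    _ ≤ ∑ Y, bernoulliWeight p Y * f Y := by
      gcongr with Y
      · exact bernoulliWeight_nonneg hp0 hp1 Y
      · exact hmin Y (mem_univ Y)

lemma exists_card_add_card_disjoint_le {p : ℝ} (hp0 : 0 ≤ p) (hp1 : p ≤ 1)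
    (N : α → Finset α) :
    ∃ X : Finset α, (#X + #{i | Disjoint (N i) X} : ℝ) ≤
      Fintype.card α * p + ∑ i, (1 - p) ^ #(N i) := by
  obtain ⟨X, hX⟩ := exists_le_sum_bernoulliWeight_mul hp0 hp1
    (fun X => (#X + #{i | Disjoint (N i) X} : ℝ))
  refine ⟨X, hX.trans_eq ?_⟩
  have hcard : ∀ X : Finset α, bernoulliWeight p X * #X = bernoulliWeight p X * #{i | i ∈ X} :=
    fun X => by rw [filter_univ_mem]
  simp only [mul_add, sum_add_distrib, hcard]
  rw [sum_bernoulliWeight_mul_card_filter p (fun i X => i ∈ X),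
    sum_bernoulliWeight_mul_card_filter p (fun i X => Disjoint (N i) X)]
  simp only [sum_bernoulliWeight_mem, sum_bernoulliWeight_disjoint, sum_const, card_univ,
    nsmul_eq_mul]

end BernoulliWeight

lemma log_div_self_mem_Icc {d : ℕ} (hd : 1 ≤ d) : log d / d ∈ Set.Icc (0 : ℝ) 1 := by
  have hd0 : (0 : ℝ) < d := by exact_mod_cast hd
  exact ⟨div_nonneg (log_natCast_nonneg d) hd0.le, (div_le_one hd0).2 (log_le_self hd0.le)⟩

lemma one_sub_log_div_pow_le_inv {d k : ℕ} (hd : 1 ≤ d) (hk : d ≤ k) :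
    (1 - log d / d) ^ k ≤ (d : ℝ)⁻¹ := by
  have hd0 : (0 : ℝ) < d := by exact_mod_cast hd
  obtain ⟨hp0, hp1⟩ := log_div_self_mem_Icc hd
  calc (1 - log d / d) ^ k ≤ (1 - log d / d) ^ d :=
        pow_le_pow_of_le_one (by linarith) (by linarith) hk
    _ ≤ exp (-(log d / d)) ^ d := by
      gcongr
      linarith [add_one_le_exp (-(log d / d))]
    _ = (d : ℝ)⁻¹ := by
      rw [← exp_nat_mul, mul_neg, mul_div_cancel₀ _ hd0.ne', exp_neg, exp_log hd0]

@[simp] lemma mem_N2 {G : SimpleGraph (Fin n)} {i j : Fin n} : j ∈ N2 G i ↔ G.dist i j = 2 := by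
  simp [N2]

@[simp] lemma mem_Nbr {G : SimpleGraph (Fin n)} {i j : Fin n} : j ∈ Nbr G i ↔ G.Adj i j := by
  simp [Nbr]

lemma minHopDeg_le_card_N2 (G : SimpleGraph (Fin n)) (i : Fin n) : minHopDeg G ≤ #(N2 G i) :=
  ciInf_le (OrderBot.bddBelow _) i

lemma minDeg_le_card_Nbr (G : SimpleGraph (Fin n)) (i : Fin n) : minDeg G ≤ #(Nbr G i) :=
  ciInf_le (OrderBot.bddBelow _) i

lemma exists_isTwoStepDomSet_card_le_card_add {G : SimpleGraph (Fin n)}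
    (hN2 : ∀ i, (N2 G i).Nonempty) (X : Finset (Fin n)) :
    ∃ D, IsTwoStepDomSet G D ∧ #D ≤ #X + #{i | Disjoint (N2 G i) X} := by
  choose c hc using hN2
  refine ⟨X ∪ image c {i | Disjoint (N2 G i) X}, fun u => ?_,
    (card_union_le _ _).trans (Nat.add_le_add_left card_image_le _)⟩
  by_cases hu : Disjoint (N2 G u) X
  · exact ⟨c u, mem_union_right _ (mem_image_of_mem c (by simpa using hu)), mem_N2.1 (hc u)⟩
  · obtain ⟨v, hvN, hvX⟩ := not_disjoint_iff.1 hu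
    exact ⟨v, mem_union_left _ hvX, mem_N2.1 hvN⟩

theorem exists_isTwoStepDomSet_card_le {G : SimpleGraph (Fin n)} (hδh : 1 ≤ minHopDeg G) :
    ∃ D, IsTwoStepDomSet G D ∧
      (#D : ℝ) ≤ (log (minHopDeg G) + 1) / minHopDeg G * n := by
  set d := minHopDeg G
  obtain ⟨hp0, hp1⟩ := log_div_self_mem_Icc hδh
  have hN2 : ∀ i, (N2 G i).Nonempty := fun i => card_pos.1 (hδh.trans (minHopDeg_le_card_N2 G i))
  obtain ⟨X, hX⟩ := exists_card_add_card_disjoint_le hp0 hp1 (N2 G)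
  obtain ⟨D, hD, hcard⟩ := exists_isTwoStepDomSet_card_le_card_add hN2 X
  refine ⟨D, hD, ?_⟩
  calc (#D : ℝ) ≤ #X + #{i | Disjoint (N2 G i) X} := by exact_mod_cast hcard
    _ ≤ n * (log d / d) + ∑ i, (1 - log d / d) ^ #(N2 G i) := by simpa using hX
    _ ≤ n * (log d / d) + ∑ _i : Fin n, (d : ℝ)⁻¹ := by
      gcongr with i
      exact one_sub_log_div_pow_le_inv hδh (minHopDeg_le_card_N2 G i)
    _ = (log d + 1) / d * n := by
      simp only [sum_const, card_univ, Fintype.card_fin, nsmul_eq_mul]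
      field_simp

lemma IsTwoStepDomSet.isTotalRestrainedHopDomSet {G : SimpleGraph (Fin n)} {D : Finset (Fin n)}
    (hD : IsTwoStepDomSet G D) (hcard : #D < minDeg G) : IsTotalRestrainedHopDomSet G D := by
  refine ⟨hD, fun u _ => ?_⟩
  have hNbr : ¬ Nbr G u ⊆ D := fun h =>
    (card_le_card h).not_gt (hcard.trans_le (minDeg_le_card_Nbr G u))
  obtain ⟨v, hvN, hvD⟩ := not_subset.1 hNbr
  exact ⟨v, hvD, mem_Nbr.1 hvN⟩

lemma trhDomNum_le_card {G : SimpleGraph (Fin n)} {D : Finset (Fin n)}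
    (hD : IsTotalRestrainedHopDomSet G D) : trhDomNum G ≤ #D :=
  Nat.sInf_le ⟨D, hD, rfl⟩

theorem stmt11_general {n : ℕ} (G : SimpleGraph (Fin n))
    (hδh : 1 ≤ minHopDeg G)
    (hn : (n : ℝ) < (minDeg G) * (minHopDeg G) / (Real.log (minHopDeg G) + 1)) :
    (trhDomNum G : ℝ) ≤
      (Real.log (minHopDeg G) + 1) / (minHopDeg G) * n := by
  obtain ⟨D, hD, hcard⟩ := exists_isTwoStepDomSet_card_le hδh
  have hd0 : (0 : ℝ) < minHopDeg G := by exact_mod_cast hδh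
  have hbound_lt : (log (minHopDeg G) + 1) / minHopDeg G * n < minDeg G := by
    rw [lt_div_iff₀ (by positivity)] at hn
    rw [div_mul_eq_mul_div, div_lt_iff₀ hd0]
    linarith
  have hD_lt : #D < minDeg G := by exact_mod_cast hcard.trans_lt hbound_lt
  calc (trhDomNum G : ℝ) ≤ #D := by
        exact_mod_cast trhDomNum_le_card (hD.isTotalRestrainedHopDomSet hD_lt)
    _ ≤ _ := hcard

theorem stmt11 {n : ℕ} (G : SimpleGraph (Fin n)) (hδ : 1 ≤ minDeg G)
    (hδh : 1 ≤ minHopDeg G)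
    (hn : (n : ℝ) < (minDeg G) * (minHopDeg G) / (Real.log (minHopDeg G) + 1)) :
    (trhDomNum G : ℝ) ≤
      (Real.log (minHopDeg G) + 1) / (minHopDeg G) * n :=
  stmt11_general G hδh hn
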